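/- arXiv:2505.08486 — 2 statements merged into one kernel-verified Lean document; each statement's English description precedes it below -/
import Mathlib

section
/- For every ν>0 and t>0, the function G_L(t,·,·) is smooth and satisfies the linearized vorticity equation ∂_t G_L(t,x,y) − ν(∂_x² + ∂_y²)G_L(t,x,y) + y ∂_x G_L(t,x,y) = 0 at every (x,y) ∈ ℝ², and moreover ∫_{ℝ²} G_L(t,x,y) dx dy = 1. -/
open MeasureTheory

/-- The fundamental solution `G_L` of the linearized vorticity equation
`∂_t ω - ν Δ ω + y ∂_x ω = 0` near Couette flow. -/
noncomputable def kernelGL (ν t x y : ℝ) : ℝ :=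
  (4 * Real.pi * ν * t * Real.sqrt (1 + t ^ 2 / 12))⁻¹ *
    Real.exp (-(x ^ 2 / (4 * ν * t * (1 + t ^ 2 / 3))) -
      ((1 + t ^ 2 / 3) * y - t / 2 * x) ^ 2 /
        (4 * ν * t * (1 + t ^ 2 / 3) * (1 + t ^ 2 / 12)))

lemma GL_hasDerivAt_x (ν t y x : ℝ) :
    HasDerivAt (fun x' => kernelGL ν t x' y)
      (kernelGL ν t x y *
        (-(2 * x / (4 * ν * t * (1 + t ^ 2 / 3))) +
          t * ((1 + t ^ 2 / 3) * y - t / 2 * x) /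
            (4 * ν * t * (1 + t ^ 2 / 3) * (1 + t ^ 2 / 12)))) x := by
  unfold kernelGL
  have hsq : HasDerivAt (fun x' : ℝ => x' ^ 2) (2 * x) x := by
    simpa using hasDerivAt_pow 2 x
  have hu : HasDerivAt (fun x' : ℝ => (1 + t ^ 2 / 3) * y - t / 2 * x') (-(t / 2)) x := by
    simpa using ((hasDerivAt_id x).const_mul (t / 2)).const_sub ((1 + t ^ 2 / 3) * y)
  have hu2 : HasDerivAt (fun x' : ℝ => ((1 + t ^ 2 / 3) * y - t / 2 * x') ^ 2)
      (2 * ((1 + t ^ 2 / 3) * y - t / 2 * x) * -(t / 2)) x := by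
    simpa using hu.fun_pow 2
  have hF := ((hsq.div_const (4 * ν * t * (1 + t ^ 2 / 3))).fun_neg).fun_sub
    (hu2.div_const (4 * ν * t * (1 + t ^ 2 / 3) * (1 + t ^ 2 / 12)))
  have := (hF.exp).const_mul ((4 * Real.pi * ν * t * Real.sqrt (1 + t ^ 2 / 12))⁻¹)
  convert! this using 1
  ring

lemma GL_hasDerivAt_y (ν t x y : ℝ) :
    HasDerivAt (fun y' => kernelGL ν t x y')
      (kernelGL ν t x y *
        (-(2 * (1 + t ^ 2 / 3) * ((1 + t ^ 2 / 3) * y - t / 2 * x) /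
            (4 * ν * t * (1 + t ^ 2 / 3) * (1 + t ^ 2 / 12))))) y := by
  unfold kernelGL
  have hu : HasDerivAt (fun y' : ℝ => (1 + t ^ 2 / 3) * y' - t / 2 * x) (1 + t ^ 2 / 3) y := by
    simpa using ((hasDerivAt_id y).const_mul (1 + t ^ 2 / 3)).sub_const (t / 2 * x)
  have hu2 : HasDerivAt (fun y' : ℝ => ((1 + t ^ 2 / 3) * y' - t / 2 * x) ^ 2)
      (2 * ((1 + t ^ 2 / 3) * y - t / 2 * x) * (1 + t ^ 2 / 3)) y := by
    simpa using hu.fun_pow 2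
  have hF := (hu2.div_const (4 * ν * t * (1 + t ^ 2 / 3) * (1 + t ^ 2 / 12))).const_sub
    (-(x ^ 2 / (4 * ν * t * (1 + t ^ 2 / 3))))
  have := (hF.exp).const_mul ((4 * Real.pi * ν * t * Real.sqrt (1 + t ^ 2 / 12))⁻¹)
  convert! this using 1
  ring

lemma GL_hasDerivAt_t (ν x y t : ℝ) (hν : 0 < ν) (ht : 0 < t) :
    HasDerivAt (fun s => kernelGL ν s x y)
      (kernelGL ν t x y *
        (-(1 / t + t / (12 * (1 + t ^ 2 / 12))) +
          (x ^ 2 * (4 * ν * (1 + t ^ 2)) / (4 * ν * t * (1 + t ^ 2 / 3)) ^ 2 -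
            (2 * ((1 + t ^ 2 / 3) * y - t / 2 * x) * (2 * t / 3 * y - x / 2) *
                  (4 * ν * t * (1 + t ^ 2 / 3) * (1 + t ^ 2 / 12)) -
                ((1 + t ^ 2 / 3) * y - t / 2 * x) ^ 2 *
                  (4 * ν * (1 + t ^ 2) * (1 + t ^ 2 / 12) +
                    4 * ν * t * (1 + t ^ 2 / 3) * (t / 6))) /
              (4 * ν * t * (1 + t ^ 2 / 3) * (1 + t ^ 2 / 12)) ^ 2))) t := by
  have hπ := Real.pi_pos
  have hk2 : (0:ℝ) < 1 + t ^ 2 / 12 := by positivity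
  have hk : (0:ℝ) < 1 + t ^ 2 / 3 := by positivity
  have hS : (0:ℝ) < Real.sqrt (1 + t ^ 2 / 12) := Real.sqrt_pos.mpr hk2
  have hS2 : Real.sqrt (1 + t ^ 2 / 12) ^ 2 = 1 + t ^ 2 / 12 := Real.sq_sqrt hk2.le
  have hAne : 4 * ν * t * (1 + t ^ 2 / 3) ≠ 0 := by positivity
  have hBne : 4 * ν * t * (1 + t ^ 2 / 3) * (1 + t ^ 2 / 12) ≠ 0 := by positivity
  have hq : HasDerivAt (fun s : ℝ => 1 + s ^ 2 / 12) (t / 6) t := by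
    have := ((hasDerivAt_pow 2 t).div_const 12).const_add 1
    convert! this using 1 <;> (push_cast; ring)
  have hsqrt : HasDerivAt (fun s : ℝ => Real.sqrt (1 + s ^ 2 / 12))
      ((t / 6) / (2 * Real.sqrt (1 + t ^ 2 / 12))) t := hq.sqrt (by positivity)
  have hlin : HasDerivAt (fun s : ℝ => 4 * Real.pi * ν * s) (4 * Real.pi * ν) t := by
    simpa using (hasDerivAt_id t).const_mul (4 * Real.pi * ν)
  have hP : HasDerivAt (fun s : ℝ => 4 * Real.pi * ν * s * Real.sqrt (1 + s ^ 2 / 12))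
      (4 * Real.pi * ν * Real.sqrt (1 + t ^ 2 / 12) +
        4 * Real.pi * ν * t * ((t / 6) / (2 * Real.sqrt (1 + t ^ 2 / 12)))) t := hlin.mul hsqrt
  have hPne : 4 * Real.pi * ν * t * Real.sqrt (1 + t ^ 2 / 12) ≠ 0 := by positivity
  have hPinv : HasDerivAt (fun s : ℝ => (4 * Real.pi * ν * s * Real.sqrt (1 + s ^ 2 / 12))⁻¹)
      (-((4 * Real.pi * ν * t * Real.sqrt (1 + t ^ 2 / 12))⁻¹ *
        (1 / t + t / (12 * (1 + t ^ 2 / 12))))) t := by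
    have h := hP.inv hPne
    convert! h using 1
    set S := Real.sqrt (1 + t ^ 2 / 12) with hSdef
    rw [show (12:ℝ) * (1 + t ^ 2 / 12) = 12 * S ^ 2 by rw [hS2]]
    field_simp
    ring
  have hk3 : HasDerivAt (fun s : ℝ => 1 + s ^ 2 / 3) (2 * t / 3) t := by
    have := ((hasDerivAt_pow 2 t).div_const 3).const_add 1
    convert! this using 1 <;> (push_cast; ring)
  have hA : HasDerivAt (fun s : ℝ => 4 * ν * s * (1 + s ^ 2 / 3)) (4 * ν * (1 + t ^ 2)) t := by
    have h1 : HasDerivAt (fun s : ℝ => 4 * ν * s) (4 * ν) t := by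
      simpa using (hasDerivAt_id t).const_mul (4 * ν)
    have := h1.mul hk3
    convert! this using 1 <;> ring
  have hx2A : HasDerivAt (fun s : ℝ => x ^ 2 / (4 * ν * s * (1 + s ^ 2 / 3)))
      (-(x ^ 2 * (4 * ν * (1 + t ^ 2))) / (4 * ν * t * (1 + t ^ 2 / 3)) ^ 2) t := by
    have := (hasDerivAt_const t (x ^ 2)).div hA hAne
    convert! this using 1 <;> ring
  have hB : HasDerivAt (fun s : ℝ => 4 * ν * s * (1 + s ^ 2 / 3) * (1 + s ^ 2 / 12))
      (4 * ν * (1 + t ^ 2) * (1 + t ^ 2 / 12) + 4 * ν * t * (1 + t ^ 2 / 3) * (t / 6)) t :=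
    hA.mul hq
  have hu : HasDerivAt (fun s : ℝ => (1 + s ^ 2 / 3) * y - s / 2 * x)
      (2 * t / 3 * y - x / 2) t := by
    have h1 := hk3.mul_const y
    have h2 : HasDerivAt (fun s : ℝ => s / 2 * x) (x / 2) t := by
      have := ((hasDerivAt_id t).div_const 2).mul_const x
      convert! this using 1 <;> ring
    have := h1.sub h2
    convert! this using 1 <;> ring
  have hu2 : HasDerivAt (fun s : ℝ => ((1 + s ^ 2 / 3) * y - s / 2 * x) ^ 2)
      (2 * ((1 + t ^ 2 / 3) * y - t / 2 * x) * (2 * t / 3 * y - x / 2)) t := by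
    simpa using hu.fun_pow 2
  have hu2B : HasDerivAt (fun s : ℝ =>
      ((1 + s ^ 2 / 3) * y - s / 2 * x) ^ 2 / (4 * ν * s * (1 + s ^ 2 / 3) * (1 + s ^ 2 / 12)))
      ((2 * ((1 + t ^ 2 / 3) * y - t / 2 * x) * (2 * t / 3 * y - x / 2) *
          (4 * ν * t * (1 + t ^ 2 / 3) * (1 + t ^ 2 / 12)) -
        ((1 + t ^ 2 / 3) * y - t / 2 * x) ^ 2 *
          (4 * ν * (1 + t ^ 2) * (1 + t ^ 2 / 12) + 4 * ν * t * (1 + t ^ 2 / 3) * (t / 6))) /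
        (4 * ν * t * (1 + t ^ 2 / 3) * (1 + t ^ 2 / 12)) ^ 2) t := hu2.div hB hBne
  have hF := (hx2A.fun_neg).fun_sub hu2B
  have htot := hPinv.mul hF.exp
  unfold kernelGL
  convert! htot using 1
  ring

/-- Shear homeomorphism of the plane. -/
def shearHomeo (m : ℝ) : (ℝ × ℝ) ≃ₜ (ℝ × ℝ) where
  toFun p := (p.1, p.2 + m * p.1)
  invFun p := (p.1, p.2 - m * p.1)
  left_inv p := by simp
  right_inv p := by simp
  continuous_toFun := by fun_prop
  continuous_invFun := by fun_prop

lemma shearHomeo_measurePreserving (m : ℝ) :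
    MeasurePreserving (shearHomeo m) (volume : Measure (ℝ × ℝ)) volume := by
  rw [Measure.volume_eq_prod]
  have := (MeasurePreserving.id (volume : Measure ℝ)).skew_product
    (g := fun a y => y + m * a) (by fun_prop)
    (Filter.Eventually.of_forall fun a => map_add_right_eq_self volume (m * a))
  simpa [shearHomeo] using this

set_option maxHeartbeats 4000000 in
/-- For every `ν > 0` and `t > 0`, the function `G_L(t,·,·)` is smooth, satisfies
`∂_t G_L - ν (∂_x² + ∂_y²) G_L + y ∂_x G_L = 0` at every point of `ℝ²`,
and has total integral `1`. -/
theorem stmt_0 (ν t : ℝ) (hν : 0 < ν) (ht : 0 < t) :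
    (ContDiff ℝ (⊤ : ℕ∞) fun p : ℝ × ℝ => kernelGL ν t p.1 p.2) ∧
    (∀ x y : ℝ,
      deriv (fun s => kernelGL ν s x y) t
        - ν * (deriv (fun x' => deriv (fun x'' => kernelGL ν t x'' y) x') x
             + deriv (fun y' => deriv (fun y'' => kernelGL ν t x y'') y') y)
        + y * deriv (fun x' => kernelGL ν t x' y) x = 0) ∧
    (∫ p : ℝ × ℝ, kernelGL ν t p.1 p.2) = 1 := by
  have hπ := Real.pi_pos
  have hk : (0:ℝ) < 1 + t ^ 2 / 3 := by positivity
  have hk2 : (0:ℝ) < 1 + t ^ 2 / 12 := by positivity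
  have htne : t ≠ 0 := ht.ne'
  have hνne : ν ≠ 0 := hν.ne'
  refine ⟨?_, ?_, ?_⟩
  · unfold kernelGL
    fun_prop (disch := intros; positivity)
  · intro x y
    -- first x-derivative
    rw [(GL_hasDerivAt_x ν t y x).deriv, (GL_hasDerivAt_t ν x y t hν ht).deriv]
    -- second x-derivative
    have hfx : (fun x' => deriv (fun x'' => kernelGL ν t x'' y) x') =
        (fun x' => kernelGL ν t x' y *
          (-(2 * x' / (4 * ν * t * (1 + t ^ 2 / 3))) +
            t * ((1 + t ^ 2 / 3) * y - t / 2 * x') /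
              (4 * ν * t * (1 + t ^ 2 / 3) * (1 + t ^ 2 / 12)))) :=
      funext fun x' => (GL_hasDerivAt_x ν t y x').deriv
    have hlx : HasDerivAt (fun x' : ℝ =>
        -(2 * x' / (4 * ν * t * (1 + t ^ 2 / 3))) +
          t * ((1 + t ^ 2 / 3) * y - t / 2 * x') /
            (4 * ν * t * (1 + t ^ 2 / 3) * (1 + t ^ 2 / 12)))
        (-(2 / (4 * ν * t * (1 + t ^ 2 / 3))) +
          t * -(t / 2) / (4 * ν * t * (1 + t ^ 2 / 3) * (1 + t ^ 2 / 12))) x := by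
      have h1 : HasDerivAt (fun x' : ℝ => 2 * x' / (4 * ν * t * (1 + t ^ 2 / 3)))
          (2 / (4 * ν * t * (1 + t ^ 2 / 3))) x := by
        simpa using ((hasDerivAt_id x).const_mul 2).div_const (4 * ν * t * (1 + t ^ 2 / 3))
      have h2 : HasDerivAt (fun x' : ℝ => (1 + t ^ 2 / 3) * y - t / 2 * x') (-(t / 2)) x := by
        simpa using ((hasDerivAt_id x).const_mul (t / 2)).const_sub ((1 + t ^ 2 / 3) * y)
      exact (h1.neg).add ((h2.const_mul t).div_const
        (4 * ν * t * (1 + t ^ 2 / 3) * (1 + t ^ 2 / 12)))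
    rw [hfx, ((GL_hasDerivAt_x ν t y x).fun_mul hlx).deriv]
    -- second y-derivative
    have hfy : (fun y' => deriv (fun y'' => kernelGL ν t x y'') y') =
        (fun y' => kernelGL ν t x y' *
          (-(2 * (1 + t ^ 2 / 3) * ((1 + t ^ 2 / 3) * y' - t / 2 * x) /
              (4 * ν * t * (1 + t ^ 2 / 3) * (1 + t ^ 2 / 12))))) :=
      funext fun y' => (GL_hasDerivAt_y ν t x y').deriv
    have hly : HasDerivAt (fun y' : ℝ =>
        -(2 * (1 + t ^ 2 / 3) * ((1 + t ^ 2 / 3) * y' - t / 2 * x) /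
            (4 * ν * t * (1 + t ^ 2 / 3) * (1 + t ^ 2 / 12))))
        (-(2 * (1 + t ^ 2 / 3) * (1 + t ^ 2 / 3) /
            (4 * ν * t * (1 + t ^ 2 / 3) * (1 + t ^ 2 / 12)))) y := by
      have h2 : HasDerivAt (fun y' : ℝ => (1 + t ^ 2 / 3) * y' - t / 2 * x) (1 + t ^ 2 / 3) y := by
        simpa using ((hasDerivAt_id y).const_mul (1 + t ^ 2 / 3)).sub_const (t / 2 * x)
      have := ((h2.const_mul (2 * (1 + t ^ 2 / 3))).div_const
        (4 * ν * t * (1 + t ^ 2 / 3) * (1 + t ^ 2 / 12))).neg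
      convert! this using 1 <;> ring
    rw [hfy, ((GL_hasDerivAt_y ν t x y).fun_mul hly).deriv]
    have key : (-(1 / t + t / (12 * (1 + t ^ 2 / 12))) +
          (x ^ 2 * (4 * ν * (1 + t ^ 2)) / (4 * ν * t * (1 + t ^ 2 / 3)) ^ 2 -
            (2 * ((1 + t ^ 2 / 3) * y - t / 2 * x) * (2 * t / 3 * y - x / 2) *
                  (4 * ν * t * (1 + t ^ 2 / 3) * (1 + t ^ 2 / 12)) -
                ((1 + t ^ 2 / 3) * y - t / 2 * x) ^ 2 *
                  (4 * ν * (1 + t ^ 2) * (1 + t ^ 2 / 12) +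
                    4 * ν * t * (1 + t ^ 2 / 3) * (t / 6))) /
              (4 * ν * t * (1 + t ^ 2 / 3) * (1 + t ^ 2 / 12)) ^ 2))
        - ν * ((-(2 * x / (4 * ν * t * (1 + t ^ 2 / 3))) +
                t * ((1 + t ^ 2 / 3) * y - t / 2 * x) /
                  (4 * ν * t * (1 + t ^ 2 / 3) * (1 + t ^ 2 / 12))) *
              (-(2 * x / (4 * ν * t * (1 + t ^ 2 / 3))) +
                t * ((1 + t ^ 2 / 3) * y - t / 2 * x) /
                  (4 * ν * t * (1 + t ^ 2 / 3) * (1 + t ^ 2 / 12)))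
            + (-(2 / (4 * ν * t * (1 + t ^ 2 / 3))) +
                t * -(t / 2) / (4 * ν * t * (1 + t ^ 2 / 3) * (1 + t ^ 2 / 12)))
            + ((-(2 * (1 + t ^ 2 / 3) * ((1 + t ^ 2 / 3) * y - t / 2 * x) /
                  (4 * ν * t * (1 + t ^ 2 / 3) * (1 + t ^ 2 / 12)))) *
                (-(2 * (1 + t ^ 2 / 3) * ((1 + t ^ 2 / 3) * y - t / 2 * x) /
                  (4 * ν * t * (1 + t ^ 2 / 3) * (1 + t ^ 2 / 12))))
              + (-(2 * (1 + t ^ 2 / 3) * (1 + t ^ 2 / 3) /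
                  (4 * ν * t * (1 + t ^ 2 / 3) * (1 + t ^ 2 / 12))))))
        + y * (-(2 * x / (4 * ν * t * (1 + t ^ 2 / 3))) +
            t * ((1 + t ^ 2 / 3) * y - t / 2 * x) /
              (4 * ν * t * (1 + t ^ 2 / 3) * (1 + t ^ 2 / 12))) = 0 := by
      field_simp
      ring
    linear_combination kernelGL ν t x y * key
  · -- the integral
    set m : ℝ := (t / 2) / (1 + t ^ 2 / 3) with hm
    have hkm : (1 + t ^ 2 / 3) * m = t / 2 := by
      rw [hm]; field_simp
    have h1 : (∫ p : ℝ × ℝ, kernelGL ν t p.1 p.2) =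
        ∫ p : ℝ × ℝ, kernelGL ν t (shearHomeo m p).1 (shearHomeo m p).2 :=
      (((shearHomeo_measurePreserving m).integral_comp
        (shearHomeo m).measurableEmbedding _)).symm
    rw [h1]
    have h2 : (fun p : ℝ × ℝ => kernelGL ν t (shearHomeo m p).1 (shearHomeo m p).2) =
        fun p : ℝ × ℝ =>
          ((4 * Real.pi * ν * t * Real.sqrt (1 + t ^ 2 / 12))⁻¹ *
            Real.exp (-((4 * ν * t * (1 + t ^ 2 / 3))⁻¹) * p.1 ^ 2)) *
          Real.exp (-((1 + t ^ 2 / 3) ^ 2 /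
              (4 * ν * t * (1 + t ^ 2 / 3) * (1 + t ^ 2 / 12))) * p.2 ^ 2) := by
      funext p
      show kernelGL ν t p.1 (p.2 + m * p.1) = _
      unfold kernelGL
      have hulin : (1 + t ^ 2 / 3) * (p.2 + m * p.1) - t / 2 * p.1 = (1 + t ^ 2 / 3) * p.2 := by
        linear_combination p.1 * hkm
      rw [show -(p.1 ^ 2 / (4 * ν * t * (1 + t ^ 2 / 3))) -
            ((1 + t ^ 2 / 3) * (p.2 + m * p.1) - t / 2 * p.1) ^ 2 /
              (4 * ν * t * (1 + t ^ 2 / 3) * (1 + t ^ 2 / 12)) =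
          (-((4 * ν * t * (1 + t ^ 2 / 3))⁻¹) * p.1 ^ 2) +
            (-((1 + t ^ 2 / 3) ^ 2 /
              (4 * ν * t * (1 + t ^ 2 / 3) * (1 + t ^ 2 / 12))) * p.2 ^ 2) by
          rw [hulin]; ring]
      rw [Real.exp_add]; ring
    rw [h2, Measure.volume_eq_prod,
      integral_prod_mul
        (fun x : ℝ => (4 * Real.pi * ν * t * Real.sqrt (1 + t ^ 2 / 12))⁻¹ *
          Real.exp (-((4 * ν * t * (1 + t ^ 2 / 3))⁻¹) * x ^ 2))
        (fun y : ℝ => Real.exp (-((1 + t ^ 2 / 3) ^ 2 /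
          (4 * ν * t * (1 + t ^ 2 / 3) * (1 + t ^ 2 / 12))) * y ^ 2)),
      integral_const_mul, integral_gaussian, integral_gaussian]
    have hin : Real.pi / (4 * ν * t * (1 + t ^ 2 / 3))⁻¹ *
        (Real.pi / ((1 + t ^ 2 / 3) ^ 2 / (4 * ν * t * (1 + t ^ 2 / 3) * (1 + t ^ 2 / 12)))) =
        (4 * Real.pi * ν * t) ^ 2 * (1 + t ^ 2 / 12) := by
      field_simp
    rw [mul_assoc, ← Real.sqrt_mul (by positivity), hin, Real.sqrt_mul (by positivity),
      Real.sqrt_sq (by positivity)]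
    rw [show (4 * Real.pi * ν * t) * Real.sqrt (1 + t ^ 2 / 12) =
        4 * Real.pi * ν * t * Real.sqrt (1 + t ^ 2 / 12) by ring]
    exact inv_mul_cancel₀ (by positivity)
end

section
/- Let u₀ be a Schwartz function on ℝ² with Fourier transform û₀(ξ,η) = ∫_{ℝ²} u₀(X,Y) e^{−i(Xξ+Yη)} dX dY. Define v(τ,ξ,η) := e^{Φ(τ,ξ,η)} û₀(ξ₀(τ,ξ,η), η₀(τ,ξ,η)), where ξ₀(τ,ξ,η) = ((3ξ−√3η)/2) e^{−τ/2} + ((−ξ+√3η)/2) e^{−3τ/2}, η₀(τ,ξ,η) = ((√3ξ−η)/2) e^{−τ/2} + ((−√3ξ+3η)/2) e^{−3τ/2}, and Φ(τ,ξ,η) = −(1−e^{−τ})³ ξ² − 2√3 e^{−τ}(1−e^{−τ})² ξη − (1−e^{−τ})(1+3e^{−2τ}) η². Then v(0,·,·) = û₀ and for all τ ≥ 0 and (ξ,η) ∈ ℝ²: ∂_τ v + (√3/2) η ∂_ξ v + (2η − (√3/2) ξ) ∂_η v = −4 η² v. -/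
/-!
The transport field `V(ξ, η) = (√3/2 η, 2η - √3/2 ξ)` is linear, `V ζ = M ζ` with `M` of
eigenvalues `1/2` and `3/2`, and `(ξ₀, η₀) = e^{-τM} (ξ, η)` is the foot at time `0` of the
characteristic through `(τ, ξ, η)`, so it is annihilated by `D = ∂_τ + V · ∇`. Since `D` is a
first-order differential operator, `D (e^Φ û₀(ξ₀, η₀)) = (D Φ) v + e^Φ dû₀(D ξ₀, D η₀) = (D Φ) v`,
and `D Φ = -4η²` is a direct computation. The Fourier transform `û₀` is differentiable because
`u₀` and `‖p‖ u₀` are integrable.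
-/

open MeasureTheory SchwartzMap

/-- The Fourier transform `f̂(ξ,η) = ∫ f(X,Y) e^{-i(Xξ + Yη)} dX dY`. -/
noncomputable def ft2 (f : ℝ × ℝ → ℂ) (ξ η : ℝ) : ℂ :=
  ∫ p : ℝ × ℝ, f p * Complex.exp (-Complex.I * ((p.1 * ξ + p.2 * η : ℝ) : ℂ))

open Real

-- Mathlib's Fourier character is `x ↦ e^{2πix}`, hence the factor `(2π)⁻¹`.
noncomputable def fourierPairing : (ℝ × ℝ) →L[ℝ] (ℝ × ℝ) →L[ℝ] ℝ :=
  (2 * π)⁻¹ • ((ContinuousLinearMap.fst ℝ ℝ ℝ).smulRight (ContinuousLinearMap.fst ℝ ℝ ℝ) +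
    (ContinuousLinearMap.snd ℝ ℝ ℝ).smulRight (ContinuousLinearMap.snd ℝ ℝ ℝ))

theorem ft2_eq_fourierIntegral (f : ℝ × ℝ → ℂ) (ξ η : ℝ) :
    ft2 f ξ η =
      VectorFourier.fourierIntegral fourierChar volume fourierPairing.toLinearMap₁₂ f (ξ, η) := by
  simp only [ft2, VectorFourier.fourierIntegral, Circle.smul_def, Real.fourierChar_apply]
  congr 1 with p
  simp only [Complex.ofReal_add, Complex.ofReal_mul, neg_mul, fourierPairing, mul_inv_rev,
    map_smul, map_add, smul_add, LinearMap.add_apply, LinearMap.smul_apply,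
    ContinuousLinearMap.toLinearMap₁₂_apply_apply_apply, ContinuousLinearMap.smulRight_apply,
    ContinuousLinearMap.coe_fst', smul_apply, smul_eq_mul,
    ContinuousLinearMap.coe_snd', neg_add_rev, Complex.ofReal_ofNat, Complex.ofReal_neg,
    Complex.ofReal_inv]
  rw [mul_comm]
  congr 2
  field_simp
  ring

theorem differentiable_ft2 {f : ℝ × ℝ → ℂ} (hf : Integrable f)
    (hf' : Integrable fun p => ‖p‖ * ‖f p‖) : Differentiable ℝ fun p : ℝ × ℝ => ft2 f p.1 p.2 := by
  simp only [ft2_eq_fourierIntegral]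
  exact fun p =>
    (VectorFourier.hasFDerivAt_fourierIntegral fourierPairing hf hf' p).differentiableAt

theorem hasDerivAt_ofReal_exp_mul_comp {F : ℝ × ℝ → ℂ} {L : ℝ × ℝ →L[ℝ] ℂ} {φ f g : ℝ → ℝ}
    {φ' f' g' x : ℝ} (hφ : HasDerivAt φ φ' x) (hf : HasDerivAt f f' x) (hg : HasDerivAt g g' x)
    (hF : HasFDerivAt F L (f x, g x)) :
    HasDerivAt (fun t => (exp (φ t) : ℂ) * F (f t, g t))
      (exp (φ x) * (φ' * F (f x, g x) + L (f', g'))) x :=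
  (hφ.exp.ofReal_comp.mul (hF.comp_hasDerivAt x (hf.prodMk hg))).congr_deriv
    (by push_cast [Function.comp_apply]; ring)

section Transport

variable {E : Type*} [NormedAddCommGroup E] [NormedSpace ℝ E]

noncomputable def transportDeriv (w : ℝ → ℝ → ℝ → E) (c₁ c₂ τ ξ η : ℝ) : E :=
  deriv (fun s => w s ξ η) τ + c₁ • deriv (fun x => w τ x η) ξ + c₂ • deriv (fun y => w τ ξ y) η

theorem DifferentiableAt.hasDerivAt_partials {w : ℝ → ℝ → ℝ → E} {τ ξ η : ℝ}
    (h : DifferentiableAt ℝ ↿w (τ, ξ, η)) :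
    HasDerivAt (fun s => w s ξ η) (deriv (fun s => w s ξ η) τ) τ ∧
      HasDerivAt (fun x => w τ x η) (deriv (fun x => w τ x η) ξ) ξ ∧
      HasDerivAt (fun y => w τ ξ y) (deriv (fun y => w τ ξ y) η) η :=
  ⟨(h.comp (f := fun s => (s, ξ, η)) τ (by fun_prop)).hasDerivAt,
    (h.comp (f := fun x => (τ, x, η)) ξ (by fun_prop)).hasDerivAt,
    (h.comp (f := fun y => (τ, ξ, y)) η (by fun_prop)).hasDerivAt⟩

end Transport

theorem transportDeriv_ofReal_exp_mul_comp {F : ℝ × ℝ → ℂ} {Φ a b : ℝ → ℝ → ℝ → ℝ}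
    {c₁ c₂ τ ξ η : ℝ} (hF : DifferentiableAt ℝ F (a τ ξ η, b τ ξ η))
    (hΦ : DifferentiableAt ℝ ↿Φ (τ, ξ, η)) (ha : DifferentiableAt ℝ ↿a (τ, ξ, η))
    (hb : DifferentiableAt ℝ ↿b (τ, ξ, η)) :
    transportDeriv (fun t x y => (exp (Φ t x y) : ℂ) * F (a t x y, b t x y)) c₁ c₂ τ ξ η =
      exp (Φ τ ξ η) * (transportDeriv Φ c₁ c₂ τ ξ η * F (a τ ξ η, b τ ξ η) +
        fderiv ℝ F (a τ ξ η, b τ ξ η)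
          (transportDeriv a c₁ c₂ τ ξ η, transportDeriv b c₁ c₂ τ ξ η)) := by
  obtain ⟨hΦτ, hΦξ, hΦη⟩ := hΦ.hasDerivAt_partials
  obtain ⟨haτ, haξ, haη⟩ := ha.hasDerivAt_partials
  obtain ⟨hbτ, hbξ, hbη⟩ := hb.hasDerivAt_partials
  have hL := hF.hasFDerivAt
  simp only [transportDeriv, (hasDerivAt_ofReal_exp_mul_comp hΦτ haτ hbτ hL).deriv,
    (hasDerivAt_ofReal_exp_mul_comp hΦξ haξ hbξ hL).deriv,
    (hasDerivAt_ofReal_exp_mul_comp hΦη haη hbη hL).deriv]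
  have hpair : ∀ a₁ a₂ a₃ b₁ b₂ b₃ : ℝ,
      ((a₁ + c₁ • a₂ + c₂ • a₃, b₁ + c₁ • b₂ + c₂ • b₃) : ℝ × ℝ) =
        (a₁, b₁) + c₁ • (a₂, b₂) + c₂ • (a₃, b₃) := by
    intros; simp
  rw [hpair, map_add, map_add, map_smul, map_smul]
  simp only [Complex.real_smul, smul_eq_mul]
  push_cast
  ring

noncomputable section

def footξ (τ ξ η : ℝ) : ℝ :=
  (3 * ξ - √3 * η) / 2 * exp (-τ / 2) + (-ξ + √3 * η) / 2 * exp (-(3 * τ) / 2)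

def footη (τ ξ η : ℝ) : ℝ :=
  (√3 * ξ - η) / 2 * exp (-τ / 2) + (-√3 * ξ + 3 * η) / 2 * exp (-(3 * τ) / 2)

def dampingExponent (τ ξ η : ℝ) : ℝ :=
  -(1 - exp (-τ)) ^ 3 * ξ ^ 2 - 2 * √3 * exp (-τ) * (1 - exp (-τ)) ^ 2 * ξ * η -
    (1 - exp (-τ)) * (1 + 3 * exp (-2 * τ)) * η ^ 2

end

theorem footξ_zero (ξ η : ℝ) : footξ 0 ξ η = ξ := by
  simp only [footξ, neg_zero, mul_zero, zero_div, exp_zero]; ring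

theorem footη_zero (ξ η : ℝ) : footη 0 ξ η = η := by
  simp only [footη, neg_zero, mul_zero, zero_div, exp_zero]; ring

theorem dampingExponent_zero (ξ η : ℝ) : dampingExponent 0 ξ η = 0 := by
  simp only [dampingExponent, neg_zero, mul_zero, exp_zero]; ring

theorem transportDeriv_footξ (τ ξ η : ℝ) :
    transportDeriv footξ (√3 / 2 * η) (2 * η - √3 / 2 * ξ) τ ξ η = 0 := by
  simp (disch := fun_prop) only [transportDeriv, footξ, deriv_fun_add, deriv_fun_mul,
    deriv_div_const, deriv_fun_sub, deriv_const', zero_mul, mul_zero, add_zero, sub_self, zero_div,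
    _root_.deriv_exp, deriv_neg'', zero_add, deriv.fun_neg', deriv_const_mul_id', sub_zero,
    smul_eq_mul, zero_sub]
  linear_combination
    (exp (-τ / 2) - exp (-(3 * τ) / 2)) * ξ / 4 * Real.mul_self_sqrt zero_le_three

theorem transportDeriv_footη (τ ξ η : ℝ) :
    transportDeriv footη (√3 / 2 * η) (2 * η - √3 / 2 * ξ) τ ξ η = 0 := by
  simp (disch := fun_prop) only [transportDeriv, footη, neg_mul, deriv_fun_add, deriv_fun_mul,
    deriv_div_const, deriv_fun_sub, deriv_const', zero_mul, mul_zero, add_zero, sub_self, zero_div,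
    _root_.deriv_exp, deriv_neg'', zero_add, deriv.fun_neg', deriv_const_mul_id', sub_zero,
    smul_eq_mul, deriv_const_sub_id']
  linear_combination
    (exp (-τ / 2) - exp (-(3 * τ) / 2)) * η / 4 * Real.mul_self_sqrt zero_le_three

theorem transportDeriv_dampingExponent (τ ξ η : ℝ) :
    transportDeriv dampingExponent (√3 / 2 * η) (2 * η - √3 / 2 * ξ) τ ξ η = -4 * η ^ 2 := by
  have hs : √3 * √3 = 3 := Real.mul_self_sqrt zero_le_three
  have he : exp (-(2 * τ)) = exp (-τ) * exp (-τ) := by rw [← Real.exp_add]; ring_nf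
  simp (disch := fun_prop) only [transportDeriv, dampingExponent, neg_mul, deriv_fun_sub,
    deriv.fun_neg', deriv_fun_mul, deriv_fun_pow, Nat.cast_ofNat, Nat.add_one_sub_one, deriv_const',
    _root_.deriv_exp, deriv_neg'', mul_neg, mul_one, sub_neg_eq_add, zero_add, pow_one, mul_zero,
    add_zero, zero_mul, deriv_fun_add, deriv_const_mul_id', deriv_id'', smul_eq_mul]
  linear_combination
    (1 - exp (-τ)) ^ 2 * exp (-τ) * (ξ ^ 2 - η ^ 2) * hs +
      3 * η * (√3 * (1 - exp (-τ)) * ξ - (2 - exp (-τ)) * η) * he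

/-- The Fourier-side solution `v(τ,ξ,η) = e^{Φ(τ,ξ,η)} û₀(ξ₀(τ,ξ,η), η₀(τ,ξ,η))` of the
equation generated by the Fokker–Planck-type operator `L_∞` satisfies `v(0,·,·) = û₀` and
`∂_τ v + (√3/2) η ∂_ξ v + (2η - (√3/2) ξ) ∂_η v = -4η² v` for all `τ ≥ 0`. -/
theorem stmt_17 (u₀ : 𝓢(ℝ × ℝ, ℝ)) :
    let hatU : ℝ → ℝ → ℂ := fun ξ η => ft2 (fun p => (u₀ p : ℂ)) ξ η
    let ξ₀ : ℝ → ℝ → ℝ → ℝ := fun τ ξ η =>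
      (3 * ξ - Real.sqrt 3 * η) / 2 * Real.exp (-τ / 2) +
        (-ξ + Real.sqrt 3 * η) / 2 * Real.exp (-(3 * τ) / 2)
    let η₀ : ℝ → ℝ → ℝ → ℝ := fun τ ξ η =>
      (Real.sqrt 3 * ξ - η) / 2 * Real.exp (-τ / 2) +
        (-(Real.sqrt 3) * ξ + 3 * η) / 2 * Real.exp (-(3 * τ) / 2)
    let Φ : ℝ → ℝ → ℝ → ℝ := fun τ ξ η =>
      -(1 - Real.exp (-τ)) ^ 3 * ξ ^ 2 -
        2 * Real.sqrt 3 * Real.exp (-τ) * (1 - Real.exp (-τ)) ^ 2 * ξ * η -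
        (1 - Real.exp (-τ)) * (1 + 3 * Real.exp (-2 * τ)) * η ^ 2
    let v : ℝ → ℝ → ℝ → ℂ := fun τ ξ η =>
      ((Real.exp (Φ τ ξ η) : ℝ) : ℂ) * hatU (ξ₀ τ ξ η) (η₀ τ ξ η)
    (∀ ξ η : ℝ, v 0 ξ η = hatU ξ η) ∧
    (∀ τ : ℝ, 0 ≤ τ → ∀ ξ η : ℝ,
      deriv (fun s => v s ξ η) τ +
          ((Real.sqrt 3 / 2 * η : ℝ) : ℂ) * deriv (fun ξ' => v τ ξ' η) ξ +
          ((2 * η - Real.sqrt 3 / 2 * ξ : ℝ) : ℂ) * deriv (fun η' => v τ ξ η') η =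
        ((-4 * η ^ 2 : ℝ) : ℂ) * v τ ξ η) := by
  intro hatU ξ₀ η₀ Φ v
  refine ⟨fun ξ η => ?_, fun τ _ ξ η => ?_⟩
  · change (Real.exp (dampingExponent 0 ξ η) : ℂ) * hatU (footξ 0 ξ η) (footη 0 ξ η) = hatU ξ η
    rw [footξ_zero, footη_zero, dampingExponent_zero, exp_zero, Complex.ofReal_one, one_mul]
  · have hU : Differentiable ℝ fun p : ℝ × ℝ => hatU p.1 p.2 :=
      differentiable_ft2 u₀.integrable.ofReal (by simpa using u₀.integrable_pow_mul volume 1)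
    have key : transportDeriv v (√3 / 2 * η) (2 * η - √3 / 2 * ξ) τ ξ η =
        ((-4 * η ^ 2 : ℝ) : ℂ) * v τ ξ η := by
      change transportDeriv (fun t x y => (Real.exp (dampingExponent t x y) : ℂ) *
        (fun p : ℝ × ℝ => hatU p.1 p.2) (footξ t x y, footη t x y)) _ _ τ ξ η =
        ((-4 * η ^ 2 : ℝ) : ℂ) * ((Real.exp (dampingExponent τ ξ η) : ℂ) *
          hatU (footξ τ ξ η) (footη τ ξ η))
      rw [transportDeriv_ofReal_exp_mul_comp (hU _) (by unfold dampingExponent; fun_prop)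
        (by unfold footξ; fun_prop) (by unfold footη; fun_prop), transportDeriv_footξ,
        transportDeriv_footη, transportDeriv_dampingExponent, Prod.mk_zero_zero, map_zero, add_zero]
      push_cast
      ring
    simpa only [transportDeriv, Complex.real_smul] using key
end
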